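/- arXiv:2407.21215 — 4 statements merged into one kernel-verified Lean document; each statement's English description precedes it below -/
import Mathlib

section
/- If x̃ is an optimal solution of the linear program max ⟨c,x⟩ subject to Ax ≤ b, x ≥ 0, and x̃_τ is the unique optimal solution of the same program with the added constraint ‖x‖₂ ≤ τ, then for every τ with 0 ≤ τ ≤ ‖x̃‖₂ one has ‖x̃_τ‖₂ = τ. -/
open scoped RealInnerProductSpace
open Set Filter Topology Metric

/-! If `‖x̃_τ‖ < τ`, the points of the segment from `x̃_τ` towards `x̃` close to `x̃_τ` still lie
in the ball of radius `τ`; they are feasible and, by concavity of the objective and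
`⟪c, x̃_τ⟫ ≤ ⟪c, x̃⟫`, at least as good as `x̃_τ`. Uniqueness then forces them to equal `x̃_τ`,
so `x̃ = x̃_τ`, contradicting `τ ≤ ‖x̃‖`. -/

theorem ConcaveOn.eq_of_uniqueMaxOn_inter_closedBall_of_norm_lt
    {E : Type*} [NormedAddCommGroup E] [NormedSpace ℝ E] {S : Set E} {f : E → ℝ}
    (hf : ConcaveOn ℝ S f) {x y : E} {τ : ℝ} (hx : x ∈ S) (hy : y ∈ S) (hxy : f x ≤ f y)
    (hx_max : IsMaxOn f (S ∩ closedBall 0 τ) x)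
    (hx_uniq : ∀ z ∈ S ∩ closedBall 0 τ, f z = f x → z = x) (hx_norm : ‖x‖ < τ) :
    x = y := by
  have hnear : ∀ᶠ t in 𝓝[>] (0 : ℝ), t ∈ Ioo 0 1 ∧ ‖AffineMap.lineMap x y t‖ < τ := by
    have hlim : Tendsto (AffineMap.lineMap x y) (𝓝[>] (0 : ℝ)) (𝓝 x) :=
      tendsto_nhdsWithin_of_tendsto_nhds (AffineMap.lineMap_continuous.tendsto' 0 x (by simp))
    exact Eventually.and (Ioo_mem_nhdsGT zero_lt_one) (hlim.norm.eventually (gt_mem_nhds hx_norm))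
  obtain ⟨t, ht, hz_norm⟩ := hnear.exists
  set z := AffineMap.lineMap x y t
  have hzS : z ∈ S ∩ closedBall 0 τ :=
    ⟨hf.1.lineMap_mem hx hy ⟨ht.1.le, ht.2.le⟩, mem_closedBall_zero_iff.2 hz_norm.le⟩
  have hfz : f x ≤ f z := by
    simpa [min_eq_left hxy] using
      hf.ge_on_segment hx hy (lineMap_mem_segment ℝ x y ⟨ht.1.le, ht.2.le⟩)
  have hzx : z = x := hx_uniq z hzS (le_antisymm (hx_max hzS) hfz)
  simpa [z, ht.1.ne'] using hzx

theorem convex_setOf_mulVec_le_and_nonneg {m n : Type*} [Fintype n]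
    (A : Matrix m n ℝ) (b : m → ℝ) :
    Convex ℝ {x : EuclideanSpace ℝ n | A.mulVec x ≤ b ∧ ∀ i, 0 ≤ x i} := by
  have hmulVec : IsLinearMap ℝ (fun x : EuclideanSpace ℝ n => A.mulVec x) :=
    ⟨fun x y => by simp [Matrix.mulVec_add], fun r x => by simp [Matrix.mulVec_smul]⟩
  have hofLp : IsLinearMap ℝ (WithLp.ofLp : EuclideanSpace ℝ n → n → ℝ) :=
    ⟨fun _ _ => rfl, fun _ _ => rfl⟩
  exact ((convex_Iic b).is_linear_preimage hmulVec).inter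
    ((convex_Ici 0).is_linear_preimage hofLp)

theorem norm_of_constrained_optimizer_general
    {m n : ℕ} (A : Matrix (Fin m) (Fin n) ℝ) (b : Fin m → ℝ)
    (c : EuclideanSpace ℝ (Fin n))
    (xt : EuclideanSpace ℝ (Fin n))
    (hxt_feas : A.mulVec xt ≤ b ∧ ∀ i, 0 ≤ xt i)
    (hxt_opt : ∀ x : EuclideanSpace ℝ (Fin n),
      A.mulVec x ≤ b → (∀ i, 0 ≤ x i) → ⟪c, x⟫ ≤ ⟪c, xt⟫)
    (xτ : ℝ → EuclideanSpace ℝ (Fin n))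
    (hxτ_feas : ∀ τ, 0 ≤ τ →
      A.mulVec (xτ τ) ≤ b ∧ (∀ i, 0 ≤ xτ τ i) ∧ ‖xτ τ‖ ≤ τ)
    (hxτ_opt : ∀ τ, 0 ≤ τ → ∀ x : EuclideanSpace ℝ (Fin n),
      A.mulVec x ≤ b → (∀ i, 0 ≤ x i) → ‖x‖ ≤ τ → ⟪c, x⟫ ≤ ⟪c, xτ τ⟫)
    (hxτ_uniq : ∀ τ, 0 ≤ τ → ∀ x : EuclideanSpace ℝ (Fin n),
      A.mulVec x ≤ b → (∀ i, 0 ≤ x i) → ‖x‖ ≤ τ → ⟪c, x⟫ = ⟪c, xτ τ⟫ → x = xτ τ) :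
    ∀ τ, 0 ≤ τ → τ ≤ ‖xt‖ → ‖xτ τ‖ = τ := by
  intro τ hτ hτ_le
  set S := {x : EuclideanSpace ℝ (Fin n) | A.mulVec x ≤ b ∧ ∀ i, 0 ≤ x i}
  obtain ⟨hA, hnonneg, hnorm⟩ := hxτ_feas τ hτ
  have hconcave : ConcaveOn ℝ S (fun x => ⟪c, x⟫) :=
    (innerSL ℝ c : EuclideanSpace ℝ (Fin n) →L[ℝ] ℝ).toLinearMap.concaveOn
      (convex_setOf_mulVec_le_and_nonneg A b)
  by_contra hne
  have hlt : ‖xτ τ‖ < τ := hnorm.lt_of_ne hne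
  have hxτ_eq : xτ τ = xt :=
    hconcave.eq_of_uniqueMaxOn_inter_closedBall_of_norm_lt ⟨hA, hnonneg⟩ hxt_feas
      (hxt_opt _ hA hnonneg)
      (fun x hx => hxτ_opt τ hτ x hx.1.1 hx.1.2 (mem_closedBall_zero_iff.1 hx.2))
      (fun x hx => hxτ_uniq τ hτ x hx.1.1 hx.1.2 (mem_closedBall_zero_iff.1 hx.2)) hlt
  exact hlt.not_ge (hxτ_eq ▸ hτ_le)

/-- If `x̃` is an optimal solution of `max ⟪c,x⟫ s.t. Ax ≤ b, x ≥ 0` (feasible set nonempty,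
bounded, containing 0), and for each `τ ≥ 0` the problem with added constraint `‖x‖₂ ≤ τ`
has `x̃_τ` as its unique optimal solution, then `‖x̃_τ‖₂ = τ` whenever `0 ≤ τ ≤ ‖x̃‖₂`. -/
theorem norm_of_constrained_optimizer
    {m n : ℕ} (A : Matrix (Fin m) (Fin n) ℝ) (b : Fin m → ℝ)
    (c : EuclideanSpace ℝ (Fin n))
    (hzero : A.mulVec (0 : EuclideanSpace ℝ (Fin n)) ≤ b)
    (hbdd : Bornology.IsBounded
      {x : EuclideanSpace ℝ (Fin n) | A.mulVec x ≤ b ∧ ∀ i, 0 ≤ x i})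
    (xt : EuclideanSpace ℝ (Fin n))
    (hxt_feas : A.mulVec xt ≤ b ∧ ∀ i, 0 ≤ xt i)
    (hxt_opt : ∀ x : EuclideanSpace ℝ (Fin n),
      A.mulVec x ≤ b → (∀ i, 0 ≤ x i) → ⟪c, x⟫ ≤ ⟪c, xt⟫)
    (xτ : ℝ → EuclideanSpace ℝ (Fin n))
    (hxτ_feas : ∀ τ, 0 ≤ τ →
      A.mulVec (xτ τ) ≤ b ∧ (∀ i, 0 ≤ xτ τ i) ∧ ‖xτ τ‖ ≤ τ)
    (hxτ_opt : ∀ τ, 0 ≤ τ → ∀ x : EuclideanSpace ℝ (Fin n),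
      A.mulVec x ≤ b → (∀ i, 0 ≤ x i) → ‖x‖ ≤ τ → ⟪c, x⟫ ≤ ⟪c, xτ τ⟫)
    (hxτ_uniq : ∀ τ, 0 ≤ τ → ∀ x : EuclideanSpace ℝ (Fin n),
      A.mulVec x ≤ b → (∀ i, 0 ≤ x i) → ‖x‖ ≤ τ → ⟪c, x⟫ = ⟪c, xτ τ⟫ → x = xτ τ) :
    ∀ τ, 0 ≤ τ → τ ≤ ‖xt‖ → ‖xτ τ‖ = τ :=
  norm_of_constrained_optimizer_general A b c xt hxt_feas hxt_opt xτ hxτ_feas hxτ_opt hxτ_uniq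
end

section
/- Under assumptions (a)–(d) with parameter ε ≥ 0, the decoupled estimate ẑ* := max over τ ∈ [0, R] of (⟨c, x̃_τ⟩ + E_ξ[Q((‖x̃_τ‖₂,0,…,0)ᵀ, ξ)]) satisfies ẑ* ≤ z* + ε, where z* is the optimal value of the two-stage stochastic program. -/
open scoped RealInnerProductSpace

/-- Under assumptions (a)–(d) with parameter `ε ≥ 0`, the decoupled estimate
`ẑ* = max_{0 ≤ τ ≤ R} (⟪c, x̃_τ⟫ + E_ξ Q((‖x̃_τ‖, 0, …, 0)ᵀ, ξ))` satisfies
`ẑ* ≤ z* + ε`, where `z*` is the optimal value of the two-stage stochastic program. -/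
theorem decoupled_upper_bound
    {m₁ n₁ m₂ n₂ : ℕ} [NeZero n₁] {ι : Type*} [Fintype ι]
    (A : Matrix (Fin m₁) (Fin n₁) ℝ) (b : Fin m₁ → ℝ) (c : EuclideanSpace ℝ (Fin n₁))
    -- scenario probabilities
    (P : ι → ℝ) (hP0 : ∀ ξ, 0 ≤ P ξ) (hP1 : ∑ ξ, P ξ = 1)
    -- second stage data
    (q : ι → EuclideanSpace ℝ (Fin n₂)) (W : ι → Matrix (Fin m₂) (Fin n₂) ℝ)
    (h : ι → Fin m₂ → ℝ) (T : ι → Matrix (Fin m₂) (Fin n₁) ℝ)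
    (ε : ℝ) (hε : 0 ≤ ε)
    -- R = max norm over the (nonempty bounded) first-stage feasible set
    (R : ℝ)
    (hR : IsGreatest {r : ℝ | ∃ x : EuclideanSpace ℝ (Fin n₁),
      A.mulVec x ≤ b ∧ (∀ i, 0 ≤ x i) ∧ r = ‖x‖} R)
    -- (a) unique optimal solutions x̃_τ of the τ-constrained first-stage problem
    (xτ : ℝ → EuclideanSpace ℝ (Fin n₁))
    (hxτ_feas : ∀ τ, 0 ≤ τ →
      A.mulVec (xτ τ) ≤ b ∧ (∀ i, 0 ≤ xτ τ i) ∧ ‖xτ τ‖ ≤ τ)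
    (hxτ_opt : ∀ τ, 0 ≤ τ → ∀ x : EuclideanSpace ℝ (Fin n₁),
      A.mulVec x ≤ b → (∀ i, 0 ≤ x i) → ‖x‖ ≤ τ → ⟪c, x⟫ ≤ ⟪c, xτ τ⟫)
    (hxτ_uniq : ∀ τ, 0 ≤ τ → ∀ x : EuclideanSpace ℝ (Fin n₁),
      A.mulVec x ≤ b → (∀ i, 0 ≤ x i) → ‖x‖ ≤ τ → ⟪c, x⟫ = ⟪c, xτ τ⟫ → x = xτ τ)
    -- (b) for every x with ‖x‖ ≤ R and every scenario ξ, the recourse problem is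
    -- feasible and bounded, with Q x ξ its (attained) optimal value
    (Q : EuclideanSpace ℝ (Fin n₁) → ι → ℝ)
    (hQ : ∀ x : EuclideanSpace ℝ (Fin n₁), ‖x‖ ≤ R → ∀ ξ,
      IsGreatest {r : ℝ | ∃ y : EuclideanSpace ℝ (Fin n₂),
        (∀ j, 0 ≤ y j) ∧ (W ξ).mulVec y ≤ h ξ - (T ξ).mulVec x ∧ r = ⟪q ξ, y⟫} (Q x ξ))
    -- (c) approximate rotational invariance
    (hrot : ∀ x : EuclideanSpace ℝ (Fin n₁), ‖x‖ ≤ R →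
      |(∑ ξ, P ξ * Q x ξ) -
        (∑ ξ, P ξ * Q (EuclideanSpace.single (0 : Fin n₁) ‖x‖) ξ)| ≤ ε)
    -- (d) approximate monotonicity past ‖x̃‖ (with x̃ = x̃_R the first-stage optimum)
    (hmono : ∀ τ₁ τ₂ : ℝ, ‖xτ R‖ ≤ τ₁ → τ₁ ≤ τ₂ → τ₂ ≤ R →
      (∑ ξ, P ξ * Q (EuclideanSpace.single (0 : Fin n₁) τ₂) ξ) - ε ≤
        ∑ ξ, P ξ * Q (EuclideanSpace.single (0 : Fin n₁) τ₁) ξ)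
    -- z* : optimal value of the two-stage program
    (zstar : ℝ)
    (hzstar : IsGreatest {v : ℝ | ∃ x : EuclideanSpace ℝ (Fin n₁),
      A.mulVec x ≤ b ∧ (∀ i, 0 ≤ x i) ∧ v = ⟪c, x⟫ + ∑ ξ, P ξ * Q x ξ} zstar)
    -- ẑ* : decoupled estimate
    (zhat : ℝ)
    (hzhat : IsGreatest {v : ℝ | ∃ τ ∈ Set.Icc (0 : ℝ) R,
      v = ⟪c, xτ τ⟫ +
        ∑ ξ, P ξ * Q (EuclideanSpace.single (0 : Fin n₁) ‖xτ τ‖) ξ} zhat) :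
    zhat ≤ zstar + ε := by
  obtain ⟨τ, ⟨hτ0, hτR⟩, hv⟩ := hzhat.1
  obtain ⟨hfA, hfpos, hfn⟩ := hxτ_feas τ hτ0
  have hxR : ‖xτ τ‖ ≤ R := hR.2 ⟨xτ τ, hfA, hfpos, rfl⟩
  have hrot' := hrot (xτ τ) hxR
  have h1 : (∑ ξ, P ξ * Q (EuclideanSpace.single (0 : Fin n₁) ‖xτ τ‖) ξ) ≤
      (∑ ξ, P ξ * Q (xτ τ) ξ) + ε := by
    have := abs_le.mp hrot'
    linarith [this.1]
  have h2 : ⟪c, xτ τ⟫ + ∑ ξ, P ξ * Q (xτ τ) ξ ≤ zstar :=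
    hzstar.2 ⟨xτ τ, hfA, hfpos, rfl⟩
  rw [hv]; linarith
end

section
/- Under assumptions (a)–(d) with parameter ε ≥ 0, the decoupled estimate ẑ* satisfies z* ≤ ẑ* + 2ε; combined with the upper bound this yields |z* − ẑ*| ≤ 2ε. -/
open scoped RealInnerProductSpace
open Metric

/-!
Let `x*` be optimal for the two-stage program and `τ = ‖x*‖`. Rotational invariance moves the
recourse term of `x*` onto the axis point `τ e₀` at cost `ε`, and `x̃_τ` beats `x*` in the first
stage. If `‖x̃_τ‖ = τ`, the resulting bound is a term of `ẑ*`. Otherwise the norm constraint is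
inactive at `x̃_τ`; a local maximum of a linear function on a convex set is global, so
`x̃_τ = x̃_R` by uniqueness, and approximate monotonicity moves the axis point from `τ` down to
`‖x̃_R‖` at a further cost `ε`. The reverse bound `ẑ* ≤ z* + ε` is rotational invariance at `x̃_τ`.
-/

theorem IsMaxOn.of_isMaxOn_inter_of_mem_nhds {E : Type*} [NormedAddCommGroup E]
    [NormedSpace ℝ E] {S t : Set E} {f : E → ℝ} {x : E} (hf : ConcaveOn ℝ S f) (hx : x ∈ S)
    (ht : t ∈ nhds x) (hmax : IsMaxOn f (S ∩ t) x) : IsMaxOn f S x :=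
  .of_isLocalMaxOn_of_concaveOn hx (Filter.mem_of_superset (inter_mem_nhdsWithin S ht) hmax) hf

theorem eq_of_isMaxOn_of_norm_lt {E : Type*} [NormedAddCommGroup E] [NormedSpace ℝ E]
    {S : Set E} {f : E → ℝ} (hf : ConcaveOn ℝ S f) {x y : E} {τ R : ℝ} (hx : x ∈ S)
    (hxτ : ‖x‖ < τ) (hxR : ‖x‖ ≤ R) (hxmax : IsMaxOn f (S ∩ closedBall 0 τ) x) (hy : y ∈ S)
    (hymax : IsMaxOn f (S ∩ closedBall 0 R) y)
    (hyuniq : ∀ z ∈ S ∩ closedBall 0 R, f z = f y → z = y) : x = y := by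
  have hball : closedBall (0 : E) τ ∈ nhds x :=
    Filter.mem_of_superset (isOpen_ball.mem_nhds (mem_ball_zero_iff.2 hxτ)) ball_subset_closedBall
  have hxR' : x ∈ S ∩ closedBall 0 R := ⟨hx, mem_closedBall_zero_iff.2 hxR⟩
  exact hyuniq x hxR' <| le_antisymm (hymax hxR') <|
    hxmax.of_isMaxOn_inter_of_mem_nhds hf hx hball hy

def feasibleSet {m n : ℕ} (A : Matrix (Fin m) (Fin n) ℝ) (b : Fin m → ℝ) :
    Set (EuclideanSpace ℝ (Fin n)) :=
  {x | A.mulVec x ≤ b ∧ ∀ i, 0 ≤ x i}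

theorem convex_feasibleSet {m n : ℕ} (A : Matrix (Fin m) (Fin n) ℝ) (b : Fin m → ℝ) :
    Convex ℝ (feasibleSet A b) := by
  have : feasibleSet A b = (WithLp.linearEquiv 2 ℝ (Fin n → ℝ)).toLinearMap ⁻¹'
      (A.mulVecLin ⁻¹' Set.Iic b ∩ Set.Ici 0) := by
    ext x
    simp [feasibleSet, Pi.le_def]
  rw [this]
  exact ((convex_Iic b).linear_preimage _ |>.inter (convex_Ici 0)).linear_preimage _

def expectation {ι : Type*} [Fintype ι] (P g : ι → ℝ) : ℝ :=
  ∑ ξ, P ξ * g ξ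

section TwoStage

variable {m n : ℕ} {ι : Type*} [Fintype ι] {A : Matrix (Fin m) (Fin n) ℝ}
  {b : Fin m → ℝ} {c : EuclideanSpace ℝ (Fin n)} {xτ : ℝ → EuclideanSpace ℝ (Fin n)} {R : ℝ}

theorem optimizer_eq_of_norm_lt
    (hxτ_feas : ∀ τ, 0 ≤ τ → A.mulVec (xτ τ) ≤ b ∧ (∀ i, 0 ≤ xτ τ i) ∧ ‖xτ τ‖ ≤ τ)
    (hxτ_opt : ∀ τ, 0 ≤ τ → ∀ x : EuclideanSpace ℝ (Fin n),
      A.mulVec x ≤ b → (∀ i, 0 ≤ x i) → ‖x‖ ≤ τ → ⟪c, x⟫ ≤ ⟪c, xτ τ⟫)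
    (hxτ_uniq : ∀ τ, 0 ≤ τ → ∀ x : EuclideanSpace ℝ (Fin n),
      A.mulVec x ≤ b → (∀ i, 0 ≤ x i) → ‖x‖ ≤ τ → ⟪c, x⟫ = ⟪c, xτ τ⟫ → x = xτ τ)
    {τ : ℝ} (hτ : 0 ≤ τ) (hτR : τ ≤ R) (hlt : ‖xτ τ‖ < τ) : xτ τ = xτ R := by
  have hR : 0 ≤ R := hτ.trans hτR
  have hmax : ∀ s, 0 ≤ s → IsMaxOn (⟪c, ·⟫) (feasibleSet A b ∩ closedBall 0 s) (xτ s) :=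
    fun s hs z ⟨⟨hA, h0⟩, hz⟩ => hxτ_opt s hs z hA h0 (mem_closedBall_zero_iff.1 hz)
  obtain ⟨hA, h0, hnorm⟩ := hxτ_feas τ hτ
  obtain ⟨hAR, h0R, -⟩ := hxτ_feas R hR
  exact eq_of_isMaxOn_of_norm_lt ((innerₛₗ ℝ c).concaveOn (convex_feasibleSet A b)) ⟨hA, h0⟩
    hlt (hnorm.trans hτR) (hmax τ hτ) ⟨hAR, h0R⟩ (hmax R hR)
    fun z ⟨⟨hA, h0⟩, hz⟩ => hxτ_uniq R hR z hA h0 (mem_closedBall_zero_iff.1 hz)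

theorem value_le_decoupled_add_two_mul [NeZero n] {P : ι → ℝ} {Q : EuclideanSpace ℝ (Fin n) → ι → ℝ}
    {ε zhat : ℝ} (hε : 0 ≤ ε)
    (hxτ_feas : ∀ τ, 0 ≤ τ → A.mulVec (xτ τ) ≤ b ∧ (∀ i, 0 ≤ xτ τ i) ∧ ‖xτ τ‖ ≤ τ)
    (hxτ_opt : ∀ τ, 0 ≤ τ → ∀ x : EuclideanSpace ℝ (Fin n),
      A.mulVec x ≤ b → (∀ i, 0 ≤ x i) → ‖x‖ ≤ τ → ⟪c, x⟫ ≤ ⟪c, xτ τ⟫)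
    (hxτ_uniq : ∀ τ, 0 ≤ τ → ∀ x : EuclideanSpace ℝ (Fin n),
      A.mulVec x ≤ b → (∀ i, 0 ≤ x i) → ‖x‖ ≤ τ → ⟪c, x⟫ = ⟪c, xτ τ⟫ → x = xτ τ)
    (hrot : ∀ x : EuclideanSpace ℝ (Fin n), ‖x‖ ≤ R →
      |expectation P (Q x) - expectation P (Q (EuclideanSpace.single 0 ‖x‖))| ≤ ε)
    (hmono : ∀ τ₁ τ₂ : ℝ, ‖xτ R‖ ≤ τ₁ → τ₁ ≤ τ₂ → τ₂ ≤ R →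
      expectation P (Q (EuclideanSpace.single 0 τ₂)) - ε ≤
        expectation P (Q (EuclideanSpace.single 0 τ₁)))
    (hzhat : ∀ τ ∈ Set.Icc 0 R,
      ⟪c, xτ τ⟫ + expectation P (Q (EuclideanSpace.single 0 ‖xτ τ‖)) ≤ zhat)
    {x : EuclideanSpace ℝ (Fin n)} (hx : x ∈ feasibleSet A b) (hxR : ‖x‖ ≤ R) :
    ⟪c, x⟫ + expectation P (Q x) ≤ zhat + 2 * ε := by
  set τ := ‖x‖
  have hτ : 0 ≤ τ := norm_nonneg x
  have hfirst : ⟪c, x⟫ ≤ ⟪c, xτ τ⟫ := hxτ_opt τ hτ x hx.1 hx.2 le_rfl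
  have hsecond : expectation P (Q x) ≤ ε + expectation P (Q (EuclideanSpace.single 0 τ)) :=
    sub_le_iff_le_add.1 (abs_le.1 (hrot x hxR)).2
  suffices ⟪c, xτ τ⟫ + expectation P (Q (EuclideanSpace.single 0 τ)) ≤ zhat + ε by linarith
  obtain ⟨-, -, hnorm⟩ := hxτ_feas τ hτ
  rcases hnorm.eq_or_lt with heq | hlt
  · have hterm := hzhat τ ⟨hτ, hxR⟩
    rw [heq] at hterm
    linarith
  · have hopt := optimizer_eq_of_norm_lt hxτ_feas hxτ_opt hxτ_uniq hτ hxR hlt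
    rw [hopt] at hnorm ⊢
    linarith [hmono _ τ le_rfl hnorm hxR, hzhat R ⟨hτ.trans hxR, le_rfl⟩]

end TwoStage

theorem decoupled_two_sided_bound_general
    {m₁ n₁ : ℕ} [NeZero n₁] {ι : Type*} [Fintype ι]
    (A : Matrix (Fin m₁) (Fin n₁) ℝ) (b : Fin m₁ → ℝ) (c : EuclideanSpace ℝ (Fin n₁))
    -- scenario probabilities
    (P : ι → ℝ)
    (ε : ℝ) (hε : 0 ≤ ε)
    -- R = max norm over the (nonempty bounded) first-stage feasible set
    (R : ℝ)
    (hR : IsGreatest {r : ℝ | ∃ x : EuclideanSpace ℝ (Fin n₁),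
      A.mulVec x ≤ b ∧ (∀ i, 0 ≤ x i) ∧ r = ‖x‖} R)
    -- (a) unique optimal solutions x̃_τ of the τ-constrained first-stage problem
    (xτ : ℝ → EuclideanSpace ℝ (Fin n₁))
    (hxτ_feas : ∀ τ, 0 ≤ τ →
      A.mulVec (xτ τ) ≤ b ∧ (∀ i, 0 ≤ xτ τ i) ∧ ‖xτ τ‖ ≤ τ)
    (hxτ_opt : ∀ τ, 0 ≤ τ → ∀ x : EuclideanSpace ℝ (Fin n₁),
      A.mulVec x ≤ b → (∀ i, 0 ≤ x i) → ‖x‖ ≤ τ → ⟪c, x⟫ ≤ ⟪c, xτ τ⟫)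
    (hxτ_uniq : ∀ τ, 0 ≤ τ → ∀ x : EuclideanSpace ℝ (Fin n₁),
      A.mulVec x ≤ b → (∀ i, 0 ≤ x i) → ‖x‖ ≤ τ → ⟪c, x⟫ = ⟪c, xτ τ⟫ → x = xτ τ)
    (Q : EuclideanSpace ℝ (Fin n₁) → ι → ℝ)
    -- (c) approximate rotational invariance
    (hrot : ∀ x : EuclideanSpace ℝ (Fin n₁), ‖x‖ ≤ R →
      |(∑ ξ, P ξ * Q x ξ) -
        (∑ ξ, P ξ * Q (EuclideanSpace.single (0 : Fin n₁) ‖x‖) ξ)| ≤ ε)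
    -- (d) approximate monotonicity past ‖x̃‖ (with x̃ = x̃_R the first-stage optimum)
    (hmono : ∀ τ₁ τ₂ : ℝ, ‖xτ R‖ ≤ τ₁ → τ₁ ≤ τ₂ → τ₂ ≤ R →
      (∑ ξ, P ξ * Q (EuclideanSpace.single (0 : Fin n₁) τ₂) ξ) - ε ≤
        ∑ ξ, P ξ * Q (EuclideanSpace.single (0 : Fin n₁) τ₁) ξ)
    -- z* : optimal value of the two-stage program
    (zstar : ℝ)
    (hzstar : IsGreatest {v : ℝ | ∃ x : EuclideanSpace ℝ (Fin n₁),
      A.mulVec x ≤ b ∧ (∀ i, 0 ≤ x i) ∧ v = ⟪c, x⟫ + ∑ ξ, P ξ * Q x ξ} zstar)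
    -- ẑ* : decoupled estimate
    (zhat : ℝ)
    (hzhat : IsGreatest {v : ℝ | ∃ τ ∈ Set.Icc (0 : ℝ) R,
      v = ⟪c, xτ τ⟫ +
        ∑ ξ, P ξ * Q (EuclideanSpace.single (0 : Fin n₁) ‖xτ τ‖) ξ} zhat) :
    zstar ≤ zhat + 2 * ε ∧ |zstar - zhat| ≤ 2 * ε := by
  have hupper : zhat ≤ zstar + ε := by
    obtain ⟨τ, hτ, rfl⟩ := hzhat.1
    obtain ⟨hA, h0, hnorm⟩ := hxτ_feas τ hτ.1
    linarith [hzstar.2 ⟨xτ τ, hA, h0, rfl⟩, (abs_le.1 (hrot _ (hnorm.trans hτ.2))).1]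
  have hlower : zstar ≤ zhat + 2 * ε := by
    obtain ⟨x, hA, h0, rfl⟩ := hzstar.1
    exact value_le_decoupled_add_two_mul hε hxτ_feas hxτ_opt hxτ_uniq hrot hmono
      (fun τ hτ => hzhat.2 ⟨τ, hτ, rfl⟩) ⟨hA, h0⟩ (hR.2 ⟨x, hA, h0, rfl⟩)
  exact ⟨hlower, abs_sub_le_iff.2 ⟨by linarith, by linarith⟩⟩

/-- Under assumptions (a)–(d) with parameter `ε ≥ 0`, the decoupled estimate
`ẑ* = max_{0 ≤ τ ≤ R} (⟪c, x̃_τ⟫ + E_ξ Q((‖x̃_τ‖, 0, …, 0)ᵀ, ξ))` satisfies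
`z* ≤ ẑ* + 2ε`; combined with the upper bound this yields `|z* − ẑ*| ≤ 2ε`. -/
theorem decoupled_two_sided_bound
    {m₁ n₁ m₂ n₂ : ℕ} [NeZero n₁] {ι : Type*} [Fintype ι]
    (A : Matrix (Fin m₁) (Fin n₁) ℝ) (b : Fin m₁ → ℝ) (c : EuclideanSpace ℝ (Fin n₁))
    -- scenario probabilities
    (P : ι → ℝ) (hP0 : ∀ ξ, 0 ≤ P ξ) (hP1 : ∑ ξ, P ξ = 1)
    -- second stage data
    (q : ι → EuclideanSpace ℝ (Fin n₂)) (W : ι → Matrix (Fin m₂) (Fin n₂) ℝ)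
    (h : ι → Fin m₂ → ℝ) (T : ι → Matrix (Fin m₂) (Fin n₁) ℝ)
    (ε : ℝ) (hε : 0 ≤ ε)
    -- R = max norm over the (nonempty bounded) first-stage feasible set
    (R : ℝ)
    (hR : IsGreatest {r : ℝ | ∃ x : EuclideanSpace ℝ (Fin n₁),
      A.mulVec x ≤ b ∧ (∀ i, 0 ≤ x i) ∧ r = ‖x‖} R)
    -- (a) unique optimal solutions x̃_τ of the τ-constrained first-stage problem
    (xτ : ℝ → EuclideanSpace ℝ (Fin n₁))
    (hxτ_feas : ∀ τ, 0 ≤ τ →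
      A.mulVec (xτ τ) ≤ b ∧ (∀ i, 0 ≤ xτ τ i) ∧ ‖xτ τ‖ ≤ τ)
    (hxτ_opt : ∀ τ, 0 ≤ τ → ∀ x : EuclideanSpace ℝ (Fin n₁),
      A.mulVec x ≤ b → (∀ i, 0 ≤ x i) → ‖x‖ ≤ τ → ⟪c, x⟫ ≤ ⟪c, xτ τ⟫)
    (hxτ_uniq : ∀ τ, 0 ≤ τ → ∀ x : EuclideanSpace ℝ (Fin n₁),
      A.mulVec x ≤ b → (∀ i, 0 ≤ x i) → ‖x‖ ≤ τ → ⟪c, x⟫ = ⟪c, xτ τ⟫ → x = xτ τ)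
    -- (b) for every x with ‖x‖ ≤ R and every scenario ξ, the recourse problem is
    -- feasible and bounded, with Q x ξ its (attained) optimal value
    (Q : EuclideanSpace ℝ (Fin n₁) → ι → ℝ)
    (hQ : ∀ x : EuclideanSpace ℝ (Fin n₁), ‖x‖ ≤ R → ∀ ξ,
      IsGreatest {r : ℝ | ∃ y : EuclideanSpace ℝ (Fin n₂),
        (∀ j, 0 ≤ y j) ∧ (W ξ).mulVec y ≤ h ξ - (T ξ).mulVec x ∧ r = ⟪q ξ, y⟫} (Q x ξ))
    -- (c) approximate rotational invariance
    (hrot : ∀ x : EuclideanSpace ℝ (Fin n₁), ‖x‖ ≤ R →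
      |(∑ ξ, P ξ * Q x ξ) -
        (∑ ξ, P ξ * Q (EuclideanSpace.single (0 : Fin n₁) ‖x‖) ξ)| ≤ ε)
    -- (d) approximate monotonicity past ‖x̃‖ (with x̃ = x̃_R the first-stage optimum)
    (hmono : ∀ τ₁ τ₂ : ℝ, ‖xτ R‖ ≤ τ₁ → τ₁ ≤ τ₂ → τ₂ ≤ R →
      (∑ ξ, P ξ * Q (EuclideanSpace.single (0 : Fin n₁) τ₂) ξ) - ε ≤
        ∑ ξ, P ξ * Q (EuclideanSpace.single (0 : Fin n₁) τ₁) ξ)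
    -- z* : optimal value of the two-stage program
    (zstar : ℝ)
    (hzstar : IsGreatest {v : ℝ | ∃ x : EuclideanSpace ℝ (Fin n₁),
      A.mulVec x ≤ b ∧ (∀ i, 0 ≤ x i) ∧ v = ⟪c, x⟫ + ∑ ξ, P ξ * Q x ξ} zstar)
    -- ẑ* : decoupled estimate
    (zhat : ℝ)
    (hzhat : IsGreatest {v : ℝ | ∃ τ ∈ Set.Icc (0 : ℝ) R,
      v = ⟪c, xτ τ⟫ +
        ∑ ξ, P ξ * Q (EuclideanSpace.single (0 : Fin n₁) ‖xτ τ‖) ξ} zhat) :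
    zstar ≤ zhat + 2 * ε ∧ |zstar - zhat| ≤ 2 * ε :=
  decoupled_two_sided_bound_general A b c P ε hε R hR xτ hxτ_feas hxτ_opt hxτ_uniq Q hrot hmono
    zstar hzstar zhat hzhat
end

section
/- Suppose assumptions (a)–(d) hold with ε, and additionally the map τ ↦ ⟨c,x̃_τ⟩ + E_ξ Q((‖x̃_τ‖₂,0,…,0)ᵀ, ξ) is L-Lipschitz in τ on [0,R]. Then the discretized decoupling estimate ẑ_Δ := max_{0 ≤ k ≤ ⌈R/Δ⌉} (⟨c,x̃_{kΔ}⟩ + E_ξ Q((‖x̃_{kΔ}‖₂,0,…,0)ᵀ, ξ)) satisfies |z* − ẑ_Δ| ≤ 2ε + LΔ. -/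
open scoped RealInnerProductSpace

open Set Metric

/-!
A maximiser `x*` of the two-stage objective `⟪c, x⟫ + E Q(x, ξ)` is beaten, up to `ε`, by the
rotated point `(‖x*‖, 0, …, 0)`, and `⟪c, x*⟫ ≤ ⟪c, x̃_{‖x*‖}⟫`. Concavity of the first-stage
objective forces `x̃_τ` either onto the sphere `‖x̃_τ‖ = τ` or onto the unconstrained optimum
`x̃_R`, and in the second case approximate monotonicity of the radial recourse past `‖x̃_R‖`
costs one more `ε`. So `z*` lies within `2ε` of `sup_τ g(τ)`; since `g` is constant past `R`,
replacing `τ` by the next grid point `kΔ ≥ τ` costs at most `LΔ`.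
-/

def nonnegPolyhedron {m n : ℕ} (A : Matrix (Fin m) (Fin n) ℝ) (b : Fin m → ℝ) :
    Set (EuclideanSpace ℝ (Fin n)) :=
  {x | A.mulVec x ≤ b ∧ ∀ i, 0 ≤ x i}

theorem convex_nonnegPolyhedron {m n : ℕ} (A : Matrix (Fin m) (Fin n) ℝ) (b : Fin m → ℝ) :
    Convex ℝ (nonnegPolyhedron A b) := by
  intro x hx y hy s t hs ht hst
  refine ⟨?_, fun i ↦ ?_⟩
  · calc A.mulVec (s • x + t • y) = s • A.mulVec x + t • A.mulVec y := by
          rw [Matrix.mulVec_add, Matrix.mulVec_smul, Matrix.mulVec_smul]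
      _ ≤ s • b + t • b := add_le_add (smul_le_smul_of_nonneg_left hx.1 hs)
          (smul_le_smul_of_nonneg_left hy.1 ht)
      _ = b := by rw [← add_smul, hst, one_smul]
  · simp only [PiLp.add_apply, PiLp.smul_apply, smul_eq_mul]
    exact add_nonneg (mul_nonneg hs (hx.2 i)) (mul_nonneg ht (hy.2 i))

structure IsUniqueMaxOn {α : Type*} (f : α → ℝ) (s : Set α) (a : α) : Prop where
  mem : a ∈ s
  isMaxOn : IsMaxOn f s a
  eq_of_apply_eq : ∀ y ∈ s, f y = f a → y = a

theorem IsUniqueMaxOn.eq_of_isMaxOn {α : Type*} {f : α → ℝ} {s t : Set α} {u v : α}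
    (hu : IsUniqueMaxOn f s u) (hv : IsMaxOn f t v) (hvs : v ∈ s) (hut : u ∈ t) : v = u :=
  hu.eq_of_apply_eq v hvs (le_antisymm (hu.isMaxOn hvs) (hv hut))

section NormConstrainedArgmax

variable {E : Type*} [NormedAddCommGroup E] {S : Set E} {f : E → ℝ}
  {x : ℝ → E} {R τ : ℝ}

theorem argmax_eq_of_le (hx : ∀ τ, 0 ≤ τ → IsUniqueMaxOn f (S ∩ closedBall 0 τ) (x τ))
    (hSR : S ⊆ closedBall 0 R) (hR : 0 ≤ R) (hτ : R ≤ τ) : x τ = x R := by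
  have hxτ := hx τ (hR.trans hτ)
  have hxR := hx R hR
  exact hxR.eq_of_isMaxOn hxτ.isMaxOn ⟨hxτ.mem.1, hSR hxτ.mem.1⟩
    ⟨hxR.mem.1, closedBall_subset_closedBall hτ hxR.mem.2⟩

/-- A maximiser that does not touch the norm constraint is a local, hence (by concavity)
global, maximiser on `S`. -/
theorem argmax_eq_of_norm_lt [NormedSpace ℝ E] (hf : ConcaveOn ℝ S f)
    (hx : ∀ τ, 0 ≤ τ → IsUniqueMaxOn f (S ∩ closedBall 0 τ) (x τ))
    (hSR : S ⊆ closedBall 0 R) (hR : 0 ≤ R) (hτ : 0 ≤ τ) (hslack : ‖x τ‖ < τ) :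
    x τ = x R := by
  have hxτ := hx τ hτ
  have hball : closedBall 0 τ ∈ nhds (x τ) :=
    Filter.mem_of_superset (isOpen_ball.mem_nhds (mem_ball_zero_iff.2 hslack))
      ball_subset_closedBall
  have hlocal : IsLocalMaxOn f S (x τ) :=
    Filter.mem_of_superset (inter_mem_nhdsWithin S hball) hxτ.isMaxOn
  have hglobal : IsMaxOn f S (x τ) :=
    IsMaxOn.of_isLocalMaxOn_of_concaveOn hxτ.mem.1 hlocal hf
  exact (hx R hR).eq_of_isMaxOn hglobal ⟨hxτ.mem.1, hSR hxτ.mem.1⟩ (hx R hR).mem.1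

end NormConstrainedArgmax

section Decoupling

variable {E : Type*} [NormedAddCommGroup E] {S : Set E} {f F : E → ℝ} {G : ℝ → ℝ}
  {x : ℝ → E} {R ε zstar : ℝ}

theorem add_radial_le_of_isGreatest (hz : IsGreatest ((fun y ↦ f y + F y) '' S) zstar)
    (hrot : ∀ y ∈ S, |F y - G ‖y‖| ≤ ε) {y : E} (hy : y ∈ S) : f y + G ‖y‖ ≤ zstar + ε := by
  have hzy : f y + F y ≤ zstar := hz.2 ⟨y, hy, rfl⟩
  linarith [(abs_le.1 (hrot y hy)).1]

theorem radial_sub_le_radial_norm_argmax [NormedSpace ℝ E] (hf : ConcaveOn ℝ S f)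
    (hx : ∀ τ, 0 ≤ τ → IsUniqueMaxOn f (S ∩ closedBall 0 τ) (x τ))
    (hSR : S ⊆ closedBall 0 R) (hε : 0 ≤ ε)
    (hmono : ∀ τ₁ τ₂, ‖x R‖ ≤ τ₁ → τ₁ ≤ τ₂ → τ₂ ≤ R → G τ₂ - ε ≤ G τ₁)
    {τ : ℝ} (hτ : τ ∈ Icc 0 R) : G τ - ε ≤ G ‖x τ‖ := by
  have hnorm : ‖x τ‖ ≤ τ := mem_closedBall_zero_iff.1 (hx τ hτ.1).mem.2
  rcases hnorm.eq_or_lt with heq | hslack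
  · rw [heq]
    linarith
  · have hxR : x τ = x R := argmax_eq_of_norm_lt hf hx hSR (hτ.1.trans hτ.2) hτ.1 hslack
    exact hmono ‖x τ‖ τ (by rw [hxR]) hnorm hτ.2

theorem exists_isGreatest_le_add_radial_argmax [NormedSpace ℝ E] (hf : ConcaveOn ℝ S f)
    (hx : ∀ τ, 0 ≤ τ → IsUniqueMaxOn f (S ∩ closedBall 0 τ) (x τ))
    (hSR : S ⊆ closedBall 0 R) (hε : 0 ≤ ε)
    (hmono : ∀ τ₁ τ₂, ‖x R‖ ≤ τ₁ → τ₁ ≤ τ₂ → τ₂ ≤ R → G τ₂ - ε ≤ G τ₁)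
    (hz : IsGreatest ((fun y ↦ f y + F y) '' S) zstar)
    (hrot : ∀ y ∈ S, |F y - G ‖y‖| ≤ ε) :
    ∃ τ ∈ Icc 0 R, zstar ≤ f (x τ) + G ‖x τ‖ + 2 * ε := by
  obtain ⟨⟨xs, hxs, rfl⟩, -⟩ := hz
  have hτ : ‖xs‖ ∈ Icc 0 R := ⟨norm_nonneg xs, mem_closedBall_zero_iff.1 (hSR hxs)⟩
  have hfirst : f xs ≤ f (x ‖xs‖) :=
    (hx ‖xs‖ hτ.1).isMaxOn ⟨hxs, mem_closedBall_zero_iff.2 le_rfl⟩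
  have hsecond : G ‖xs‖ - ε ≤ G ‖x ‖xs‖‖ :=
    radial_sub_le_radial_norm_argmax hf hx hSR hε hmono hτ
  refine ⟨‖xs‖, hτ, ?_⟩
  linarith [(abs_le.1 (hrot xs hxs)).2]

end Decoupling

theorem exists_grid_point_le_add {g : ℝ → ℝ} {L R Δ τ : ℝ} (hL : 0 ≤ L) (hΔ : 0 < Δ)
    (hLip : ∀ τ₁ ∈ Icc (0 : ℝ) R, ∀ τ₂ ∈ Icc (0 : ℝ) R, |g τ₁ - g τ₂| ≤ L * |τ₁ - τ₂|)
    (hconst : ∀ t, R ≤ t → g t = g R) (hτ : τ ∈ Icc 0 R) :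
    ∃ k ≤ ⌈R / Δ⌉₊, g τ ≤ g (k * Δ) + L * Δ := by
  set k := ⌈τ / Δ⌉₊
  have hk : k ≤ ⌈R / Δ⌉₊ := Nat.ceil_mono (div_le_div_of_nonneg_right hτ.2 hΔ.le)
  have hτk : τ ≤ k * Δ := (div_le_iff₀ hΔ).1 (Nat.le_ceil _)
  have hkτ : k * Δ < τ + Δ := by
    have := Nat.ceil_lt_add_one (div_nonneg hτ.1 hΔ.le)
    rwa [← div_self hΔ.ne', ← add_div, lt_div_iff₀ hΔ] at this
  set t := min (k * Δ) R
  have ht : t ∈ Icc 0 R := ⟨le_min (hτ.1.trans hτk) (hτ.1.trans hτ.2), min_le_right _ _⟩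
  have hgt : g (k * Δ) = g t := by
    rcases le_total (k * Δ) R with hle | hge
    · simp only [t, min_eq_left hle]
    · simp only [t, min_eq_right hge, hconst _ hge]
  have hdist : |τ - t| ≤ Δ := by
    rw [abs_sub_comm, abs_of_nonneg (sub_nonneg.2 (le_min hτk hτ.2))]
    linarith [min_le_left (k * Δ) R]
  refine ⟨k, hk, ?_⟩
  calc g τ ≤ g t + L * |τ - t| := by linarith [(abs_le.1 (hLip τ hτ t ht)).2]
    _ ≤ g (k * Δ) + L * Δ := by rw [hgt]; gcongr

theorem discretized_decoupling_bound_general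
    {m₁ n₁ : ℕ} [NeZero n₁] {ι : Type*} [Fintype ι]
    (A : Matrix (Fin m₁) (Fin n₁) ℝ) (b : Fin m₁ → ℝ) (c : EuclideanSpace ℝ (Fin n₁))
    (P : ι → ℝ)
    (ε : ℝ) (hε : 0 ≤ ε)
    (R : ℝ)
    (hR : IsGreatest {r : ℝ | ∃ x : EuclideanSpace ℝ (Fin n₁),
      A.mulVec x ≤ b ∧ (∀ i, 0 ≤ x i) ∧ r = ‖x‖} R)
    -- (a) unique optimal solutions x̃_τ of the τ-constrained first-stage problem
    (xτ : ℝ → EuclideanSpace ℝ (Fin n₁))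
    (hxτ_feas : ∀ τ, 0 ≤ τ →
      A.mulVec (xτ τ) ≤ b ∧ (∀ i, 0 ≤ xτ τ i) ∧ ‖xτ τ‖ ≤ τ)
    (hxτ_opt : ∀ τ, 0 ≤ τ → ∀ x : EuclideanSpace ℝ (Fin n₁),
      A.mulVec x ≤ b → (∀ i, 0 ≤ x i) → ‖x‖ ≤ τ → ⟪c, x⟫ ≤ ⟪c, xτ τ⟫)
    (hxτ_uniq : ∀ τ, 0 ≤ τ → ∀ x : EuclideanSpace ℝ (Fin n₁),
      A.mulVec x ≤ b → (∀ i, 0 ≤ x i) → ‖x‖ ≤ τ → ⟪c, x⟫ = ⟪c, xτ τ⟫ → x = xτ τ)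
    (Q : EuclideanSpace ℝ (Fin n₁) → ι → ℝ)
    -- (c) approximate rotational invariance
    (hrot : ∀ x : EuclideanSpace ℝ (Fin n₁), ‖x‖ ≤ R →
      |(∑ ξ, P ξ * Q x ξ) -
        (∑ ξ, P ξ * Q (EuclideanSpace.single (0 : Fin n₁) ‖x‖) ξ)| ≤ ε)
    -- (d) approximate monotonicity past ‖x̃‖ (with x̃ = x̃_R)
    (hmono : ∀ τ₁ τ₂ : ℝ, ‖xτ R‖ ≤ τ₁ → τ₁ ≤ τ₂ → τ₂ ≤ R →
      (∑ ξ, P ξ * Q (EuclideanSpace.single (0 : Fin n₁) τ₂) ξ) - ε ≤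
        ∑ ξ, P ξ * Q (EuclideanSpace.single (0 : Fin n₁) τ₁) ξ)
    -- the decoupled objective g and its Lipschitz property on [0, R]
    (g : ℝ → ℝ)
    (hg : ∀ τ, g τ = ⟪c, xτ τ⟫ +
      ∑ ξ, P ξ * Q (EuclideanSpace.single (0 : Fin n₁) ‖xτ τ‖) ξ)
    (L : ℝ) (hL : 0 ≤ L)
    (hLip : ∀ τ₁ ∈ Set.Icc (0 : ℝ) R, ∀ τ₂ ∈ Set.Icc (0 : ℝ) R,
      |g τ₁ - g τ₂| ≤ L * |τ₁ - τ₂|)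
    -- z* : optimal value of the two-stage program
    (zstar : ℝ)
    (hzstar : IsGreatest {v : ℝ | ∃ x : EuclideanSpace ℝ (Fin n₁),
      A.mulVec x ≤ b ∧ (∀ i, 0 ≤ x i) ∧ v = ⟪c, x⟫ + ∑ ξ, P ξ * Q x ξ} zstar)
    -- ẑ_Δ : discretized decoupled estimate
    (Δ : ℝ) (hΔ : 0 < Δ) (zΔ : ℝ)
    (hzΔ : IsGreatest {v : ℝ | ∃ k : ℕ, k ≤ Nat.ceil (R / Δ) ∧ v = g ((k : ℝ) * Δ)} zΔ) :
    |zstar - zΔ| ≤ 2 * ε + L * Δ := by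
  set S := nonnegPolyhedron A b
  have hR0 : 0 ≤ R := by
    obtain ⟨x0, -, -, hx0⟩ := hR.1
    exact hx0 ▸ norm_nonneg x0
  have hSR : S ⊆ closedBall 0 R := fun y hy ↦
    mem_closedBall_zero_iff.2 (hR.2 ⟨y, hy.1, hy.2, rfl⟩)
  have hx : ∀ τ, 0 ≤ τ → IsUniqueMaxOn (⟪c, ·⟫) (S ∩ closedBall 0 τ) (xτ τ) := fun τ hτ ↦
    ⟨⟨⟨(hxτ_feas τ hτ).1, (hxτ_feas τ hτ).2.1⟩, mem_closedBall_zero_iff.2 (hxτ_feas τ hτ).2.2⟩,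
      fun y hy ↦ hxτ_opt τ hτ y hy.1.1 hy.1.2 (mem_closedBall_zero_iff.1 hy.2),
      fun y hy ↦ hxτ_uniq τ hτ y hy.1.1 hy.1.2 (mem_closedBall_zero_iff.1 hy.2)⟩
  have hf : ConcaveOn ℝ S (⟪c, ·⟫) := (innerₛₗ ℝ c).concaveOn (convex_nonnegPolyhedron A b)
  have hz : IsGreatest ((fun y ↦ ⟪c, y⟫ + ∑ ξ, P ξ * Q y ξ) '' S) zstar := by
    convert hzstar using 1
    ext v
    simp only [S, nonnegPolyhedron, mem_image, mem_ofPred_eq, and_assoc, eq_comm]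
  set G : ℝ → ℝ := fun t ↦ ∑ ξ, P ξ * Q (EuclideanSpace.single (0 : Fin n₁) t) ξ
  have hrot' : ∀ y ∈ S, |∑ ξ, P ξ * Q y ξ - G ‖y‖| ≤ ε :=
    fun y hy ↦ hrot y (mem_closedBall_zero_iff.1 (hSR hy))
  obtain rfl := funext hg
  obtain ⟨τ, hτ, hzτ⟩ := exists_isGreatest_le_add_radial_argmax hf hx hSR hε hmono hz hrot'
  obtain ⟨k, hk, hτk⟩ := exists_grid_point_le_add hL hΔ hLip
    (fun t ht ↦ by simp only [argmax_eq_of_le hx hSR hR0 ht]) hτ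
  have hkzΔ := hzΔ.2 ⟨k, hk, rfl⟩
  have hzΔz : zΔ ≤ zstar + ε := by
    obtain ⟨⟨j, -, rfl⟩, -⟩ := hzΔ
    exact add_radial_le_of_isGreatest hz hrot' (hx _ (mul_nonneg j.cast_nonneg hΔ.le)).mem.1
  rw [abs_sub_le_iff]
  constructor <;> linarith [mul_nonneg hL hΔ.le]

/-- Under assumptions (a)–(d) with parameter `ε ≥ 0`, if additionally the decoupled
objective `g(τ) = ⟪c,x̃_τ⟫ + E_ξ Q((‖x̃_τ‖,0,…,0)ᵀ, ξ)` is `L`-Lipschitz on `[0,R]`, then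
the discretized estimate `ẑ_Δ = max_{0 ≤ k ≤ ⌈R/Δ⌉} g(kΔ)` satisfies
`|z* − ẑ_Δ| ≤ 2ε + LΔ`. -/
theorem discretized_decoupling_bound
    {m₁ n₁ m₂ n₂ : ℕ} [NeZero n₁] {ι : Type*} [Fintype ι]
    (A : Matrix (Fin m₁) (Fin n₁) ℝ) (b : Fin m₁ → ℝ) (c : EuclideanSpace ℝ (Fin n₁))
    (P : ι → ℝ) (hP0 : ∀ ξ, 0 ≤ P ξ) (hP1 : ∑ ξ, P ξ = 1)
    (q : ι → EuclideanSpace ℝ (Fin n₂)) (W : ι → Matrix (Fin m₂) (Fin n₂) ℝ)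
    (h : ι → Fin m₂ → ℝ) (T : ι → Matrix (Fin m₂) (Fin n₁) ℝ)
    (ε : ℝ) (hε : 0 ≤ ε)
    (R : ℝ)
    (hR : IsGreatest {r : ℝ | ∃ x : EuclideanSpace ℝ (Fin n₁),
      A.mulVec x ≤ b ∧ (∀ i, 0 ≤ x i) ∧ r = ‖x‖} R)
    -- (a) unique optimal solutions x̃_τ of the τ-constrained first-stage problem
    (xτ : ℝ → EuclideanSpace ℝ (Fin n₁))
    (hxτ_feas : ∀ τ, 0 ≤ τ →
      A.mulVec (xτ τ) ≤ b ∧ (∀ i, 0 ≤ xτ τ i) ∧ ‖xτ τ‖ ≤ τ)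
    (hxτ_opt : ∀ τ, 0 ≤ τ → ∀ x : EuclideanSpace ℝ (Fin n₁),
      A.mulVec x ≤ b → (∀ i, 0 ≤ x i) → ‖x‖ ≤ τ → ⟪c, x⟫ ≤ ⟪c, xτ τ⟫)
    (hxτ_uniq : ∀ τ, 0 ≤ τ → ∀ x : EuclideanSpace ℝ (Fin n₁),
      A.mulVec x ≤ b → (∀ i, 0 ≤ x i) → ‖x‖ ≤ τ → ⟪c, x⟫ = ⟪c, xτ τ⟫ → x = xτ τ)
    -- (b) feasible bounded recourse with attained optimal values Q
    (Q : EuclideanSpace ℝ (Fin n₁) → ι → ℝ)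
    (hQ : ∀ x : EuclideanSpace ℝ (Fin n₁), ‖x‖ ≤ R → ∀ ξ,
      IsGreatest {r : ℝ | ∃ y : EuclideanSpace ℝ (Fin n₂),
        (∀ j, 0 ≤ y j) ∧ (W ξ).mulVec y ≤ h ξ - (T ξ).mulVec x ∧ r = ⟪q ξ, y⟫} (Q x ξ))
    -- (c) approximate rotational invariance
    (hrot : ∀ x : EuclideanSpace ℝ (Fin n₁), ‖x‖ ≤ R →
      |(∑ ξ, P ξ * Q x ξ) -
        (∑ ξ, P ξ * Q (EuclideanSpace.single (0 : Fin n₁) ‖x‖) ξ)| ≤ ε)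
    -- (d) approximate monotonicity past ‖x̃‖ (with x̃ = x̃_R)
    (hmono : ∀ τ₁ τ₂ : ℝ, ‖xτ R‖ ≤ τ₁ → τ₁ ≤ τ₂ → τ₂ ≤ R →
      (∑ ξ, P ξ * Q (EuclideanSpace.single (0 : Fin n₁) τ₂) ξ) - ε ≤
        ∑ ξ, P ξ * Q (EuclideanSpace.single (0 : Fin n₁) τ₁) ξ)
    -- the decoupled objective g and its Lipschitz property on [0, R]
    (g : ℝ → ℝ)
    (hg : ∀ τ, g τ = ⟪c, xτ τ⟫ +
      ∑ ξ, P ξ * Q (EuclideanSpace.single (0 : Fin n₁) ‖xτ τ‖) ξ)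
    (L : ℝ) (hL : 0 ≤ L)
    (hLip : ∀ τ₁ ∈ Set.Icc (0 : ℝ) R, ∀ τ₂ ∈ Set.Icc (0 : ℝ) R,
      |g τ₁ - g τ₂| ≤ L * |τ₁ - τ₂|)
    -- z* : optimal value of the two-stage program
    (zstar : ℝ)
    (hzstar : IsGreatest {v : ℝ | ∃ x : EuclideanSpace ℝ (Fin n₁),
      A.mulVec x ≤ b ∧ (∀ i, 0 ≤ x i) ∧ v = ⟪c, x⟫ + ∑ ξ, P ξ * Q x ξ} zstar)
    -- ẑ_Δ : discretized decoupled estimate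
    (Δ : ℝ) (hΔ : 0 < Δ) (zΔ : ℝ)
    (hzΔ : IsGreatest {v : ℝ | ∃ k : ℕ, k ≤ Nat.ceil (R / Δ) ∧ v = g ((k : ℝ) * Δ)} zΔ) :
    |zstar - zΔ| ≤ 2 * ε + L * Δ :=
  discretized_decoupling_bound_general A b c P ε hε R hR xτ hxτ_feas hxτ_opt hxτ_uniq Q hrot hmono g
    hg L hL hLip zstar hzstar Δ hΔ zΔ hzΔ
end
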